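/- Let F : [0,∞) → [0,∞) be continuous and suppose the set of 1-quick points of F is dense in {x : F(x) > 0} and F has no a-quick points for a > 1. Let G : [0,∞) → [0,∞) be continuous with 0 ≤ G ≤ F, suppose F - G also has no a-quick points for a > 1, and fix x0 with G(x0) > 0 and F(x0) - G(x0) > 0. Then, by continuity, G > 0 and F - G > 0 on a neighborhood of x0, and in that neighborhood there exists a 1-quick point x of F which is a quick point of G. -/

import Mathlib

open Filter MeasureTheory Set
open scoped ENNReal

/-- `U h = sqrt (2 h log (1/h))`. -/
noncomputable def U (h : ℝ) : ℝ := Real.sqrt (2 * h * Real.log (1 / h))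

/-- `limsup_{h ↓ 0} |F (x+h) - F x| / U h`, valued in `ℝ≥0∞`. -/
noncomputable def fastLimsup (F : ℝ → ℝ) (x : ℝ) : ℝ≥0∞ :=
  Filter.limsup (fun h => ENNReal.ofReal (|F (x + h) - F x| / U h)) (nhdsWithin 0 (Set.Ioi 0))

/-- `x` is an `a`-quick point of the nonnegative function `H` :
`limsup_{h↓0} |H(x+h)-H(x)|/U(h) ≥ 2 a sqrt (H x) > 0`. -/
def QuickAt (H : ℝ → ℝ) (a x : ℝ) : Prop :=
  ENNReal.ofReal (2 * a * Real.sqrt (H x)) ≤ fastLimsup H x ∧ 0 < 2 * a * Real.sqrt (H x)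

/-!
At a 1-quick point `x` of `F` the modulus `fastLimsup F x` is at least `2 √(F x)`, while the
absence of quick points of order `> 1` bounds `fastLimsup (F - G) x` by `2 √(F x - G x)`.
Since `fastLimsup` is subadditive and `F = G + (F - G)`, the modulus of `G` at `x` is at least
`2 √(F x) - 2 √(F x - G x)`, which is positive as soon as `G x > 0`.
-/

theorem ENNReal.limsup_add_le' {ι : Type*} (f : Filter ι) (u v : ι → ℝ≥0∞) :
    limsup (u + v) f ≤ limsup u f + limsup v f := by
  refine ENNReal.le_of_forall_pos_le_add fun ε hε hfin => ?_
  have hε2 : ((ε : ℝ≥0∞) / 2) ≠ 0 := by simpa using hε.ne'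
  have hu := ENNReal.lt_add_right (ENNReal.add_lt_top.1 hfin).1.ne hε2
  have hv := ENNReal.lt_add_right (ENNReal.add_lt_top.1 hfin).2.ne hε2
  refine limsup_le_of_le (by isBoundedDefault) ?_
  filter_upwards [eventually_lt_of_limsup_lt hu, eventually_lt_of_limsup_lt hv] with i hui hvi
  calc u i + v i ≤ (limsup u f + ε / 2) + (limsup v f + ε / 2) := add_le_add hui.le hvi.le
    _ = limsup u f + limsup v f + ε := by rw [add_add_add_comm, ENNReal.add_halves]

theorem fastLimsup_add_le (G K : ℝ → ℝ) (x : ℝ) :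
    fastLimsup (G + K) x ≤ fastLimsup G x + fastLimsup K x := by
  refine (limsup_le_limsup (Eventually.of_forall fun h => ?_)).trans
    (ENNReal.limsup_add_le' _ _ _)
  have hU : 0 ≤ U h := Real.sqrt_nonneg _
  have htri : |(G + K) (x + h) - (G + K) x| ≤ |G (x + h) - G x| + |K (x + h) - K x| := by
    simpa only [Pi.add_apply, add_sub_add_comm] using abs_add_le _ _
  calc ENNReal.ofReal (|(G + K) (x + h) - (G + K) x| / U h)
      ≤ ENNReal.ofReal (|G (x + h) - G x| / U h + |K (x + h) - K x| / U h) := by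
        rw [← add_div]; exact ENNReal.ofReal_le_ofReal (div_le_div_of_nonneg_right htri hU)
    _ ≤ _ := ENNReal.ofReal_add_le

theorem quickAt_div_of_ofReal_le_fastLimsup {H : ℝ → ℝ} {x c : ℝ} (hc : 0 < c) (hx : 0 < H x)
    (h : ENNReal.ofReal c ≤ fastLimsup H x) : QuickAt H (c / (2 * Real.sqrt (H x))) x := by
  have hsqrt : 0 < Real.sqrt (H x) := Real.sqrt_pos.2 hx
  have hc' : 2 * (c / (2 * Real.sqrt (H x))) * Real.sqrt (H x) = c := by field_simp
  rw [QuickAt, hc']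
  exact ⟨h, hc⟩

theorem fastLimsup_le_of_forall_not_quickAt {H : ℝ → ℝ} {x : ℝ}
    (hH : ∀ a : ℝ, 1 < a → ¬ QuickAt H a x) (hx : 0 < H x) :
    fastLimsup H x ≤ ENNReal.ofReal (2 * Real.sqrt (H x)) := by
  by_contra! hlt
  obtain ⟨c, -, hc, hcH⟩ := ENNReal.lt_iff_exists_real_btwn.1 hlt
  have hsqrt : 0 < 2 * Real.sqrt (H x) := by have := Real.sqrt_pos.2 hx; positivity
  have hc' : 2 * Real.sqrt (H x) < c := (ENNReal.ofReal_lt_ofReal_iff'.1 hc).1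
  exact hH _ ((one_lt_div hsqrt).2 hc')
    (quickAt_div_of_ofReal_le_fastLimsup (hsqrt.trans hc') hx hcH.le)

theorem exists_quickAt_of_quickAt_one_of_sub {F G : ℝ → ℝ} {x : ℝ} (hF : QuickAt F 1 x)
    (hFG : ∀ a : ℝ, 1 < a → ¬ QuickAt (F - G) a x) (hG : 0 < G x) (hFG_pos : 0 < F x - G x) :
    ∃ a : ℝ, 0 < a ∧ QuickAt G a x := by
  set c := 2 * Real.sqrt (F x) - 2 * Real.sqrt (F x - G x)
  have hc : 0 < c := by
    have := Real.sqrt_lt_sqrt hFG_pos.le (show F x - G x < F x by linarith)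
    linarith
  have hsplit : ENNReal.ofReal (2 * Real.sqrt (F x)) ≤
      fastLimsup G x + ENNReal.ofReal (2 * Real.sqrt (F x - G x)) :=
    calc ENNReal.ofReal (2 * Real.sqrt (F x)) ≤ fastLimsup F x := by simpa using hF.1
      _ = fastLimsup (G + (F - G)) x := by rw [add_sub_cancel]
      _ ≤ fastLimsup G x + fastLimsup (F - G) x := fastLimsup_add_le _ _ _
      _ ≤ _ := add_le_add_right (fastLimsup_le_of_forall_not_quickAt hFG hFG_pos) _
  have hcG : ENNReal.ofReal c ≤ fastLimsup G x := by
    rw [ENNReal.ofReal_sub _ (by positivity)]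
    exact tsub_le_iff_right.2 hsplit
  exact ⟨_, div_pos hc (mul_pos two_pos (Real.sqrt_pos.2 hG)),
    quickAt_div_of_ofReal_le_fastLimsup hc hG hcG⟩

theorem stmt_15_general (F G : ℝ → ℝ) (hFc : Continuous F) (hGc : Continuous G)
    (hdense : {x : ℝ | 0 < F x} ⊆ closure {x : ℝ | QuickAt F 1 x})
    (hFGa : ∀ a : ℝ, 1 < a → ∀ x : ℝ, ¬ QuickAt (F - G) a x)
    (x0 : ℝ) (h1 : 0 < G x0) (h2 : 0 < F x0 - G x0) :
    ∃ s : Set ℝ, s ∈ nhds x0 ∧ (∀ y ∈ s, 0 < G y ∧ 0 < F y - G y) ∧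
      ∃ x ∈ s, QuickAt F 1 x ∧ ∃ a : ℝ, 0 < a ∧ QuickAt G a x := by
  set s : Set ℝ := {y | 0 < G y ∧ 0 < F y - G y}
  have hs : IsOpen s :=
    (isOpen_lt continuous_const hGc).inter (isOpen_lt continuous_const (hFc.sub hGc))
  have hs0 : s ∈ nhds x0 := hs.mem_nhds ⟨h1, h2⟩
  obtain ⟨x, hxs, hxq⟩ := mem_closure_iff_nhds.1 (hdense (show 0 < F x0 by linarith)) s hs0
  exact ⟨s, hs0, fun _ hy => hy, x, hxs, hxq,
    exists_quickAt_of_quickAt_one_of_sub hxq (fun a ha => hFGa a ha x) hxs.1 hxs.2⟩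

theorem stmt_15 (F G : ℝ → ℝ) (hFc : Continuous F) (hGc : Continuous G)
    (hFnn : ∀ x, 0 ≤ F x) (hGnn : ∀ x, 0 ≤ G x) (hGF : ∀ x, G x ≤ F x)
    (hdense : {x : ℝ | 0 < F x} ⊆ closure {x : ℝ | QuickAt F 1 x})
    (hFa : ∀ a : ℝ, 1 < a → ∀ x : ℝ, ¬ QuickAt F a x)
    (hFGa : ∀ a : ℝ, 1 < a → ∀ x : ℝ, ¬ QuickAt (F - G) a x)
    (x0 : ℝ) (h1 : 0 < G x0) (h2 : 0 < F x0 - G x0) :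
    ∃ s : Set ℝ, s ∈ nhds x0 ∧ (∀ y ∈ s, 0 < G y ∧ 0 < F y - G y) ∧
      ∃ x ∈ s, QuickAt F 1 x ∧ ∃ a : ℝ, 0 < a ∧ QuickAt G a x :=
  stmt_15_general F G hFc hGc hdense hFGa x0 h1 h2
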